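/- Let X and Y be independent random variables, X exponentially distributed with mean λ_sr > 0 and Y exponentially distributed with mean λ_rd > 0. Then, as b̂ → ∞, the asymptotic average symbol error rate of BDPSK, P̄_BDPSK = (1/2)·E[ exp( −b̂·X²·Y ) ], is asymptotically equivalent to π / ( 4·λ_sr·√( b̂·λ_rd ) ), and the asymptotic average symbol error rate of noncoherent BFSK, P̄_BFSK = (1/2)·E[ exp( −(1/2)·b̂·X²·Y ) ], is asymptotically equivalent to π·√2 / ( 4·λ_sr·√( b̂·λ_rd ) ). -/

import Mathlib

/-! Conditioning on `X`, the Laplace transform `E[exp (-a Y)] = 1 / (1 + λ_rd a)` of the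
exponential law gives `E[exp (-s X² Y)] = E[(1 + s λ_rd X²)⁻¹]`. The substitution
`u = √(s λ_rd) x` in the integral against the density of `X` turns `√(s λ_rd)` times this into
`λ_sr⁻¹ ∫₀^∞ exp (-u / (λ_sr √(s λ_rd))) / (1 + u²) du`, which tends to `λ_sr⁻¹ π / 2` by
dominated convergence. BFSK is BDPSK at `b / 2`. -/

open MeasureTheory ProbabilityTheory Real Filter Set Topology

lemma integral_expMeasure {r : ℝ} (hr : 0 < r) (g : ℝ → ℝ) :
    ∫ x, g x ∂expMeasure r = ∫ x in Ioi 0, r * exp (-(r * x)) * g x := by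
  rw [expMeasure, gammaMeasure, integral_withDensity_eq_integral_toReal_smul
    (f := gammaPDF 1 r) (measurable_gammaPDFReal 1 r).ennreal_ofReal
    (ae_of_all _ fun _ => ENNReal.ofReal_lt_top), ← integral_Ici_eq_integral_Ioi,
    ← integral_indicator measurableSet_Ici]
  congr with x
  by_cases hx : 0 ≤ x <;>
    simp [gammaPDF_eq, hx, ENNReal.toReal_ofReal, mul_nonneg hr.le (exp_pos _).le]

lemma ae_nonneg_expMeasure (r : ℝ) : ∀ᵐ y ∂expMeasure r, 0 ≤ y := by
  simp only [ae_iff, not_le]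
  exact (withDensity_apply _ measurableSet_Iio).trans (lintegral_gammaPDF_of_nonpos le_rfl)

lemma integral_exp_neg_mul_expMeasure {r a : ℝ} (hr : 0 < r) (ha : 0 ≤ a) :
    ∫ y, exp (-(a * y)) ∂expMeasure r = r / (r + a) := by
  have hexp : ∀ y, r * exp (-(r * y)) * exp (-(a * y)) = r * exp (-(r + a) * y) := fun y => by
    rw [mul_assoc, ← exp_add]; ring_nf
  simp_rw [integral_expMeasure hr, hexp, integral_const_mul,
    integral_exp_mul_Ioi (by linarith : -(r + a) < 0), mul_zero, exp_zero]
  field_simp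

lemma integral_exp_neg_mul_of_indepFun {Ω : Type*} [MeasurableSpace Ω] {P : Measure Ω}
    [IsProbabilityMeasure P] {X Y : Ω → ℝ} (hX : Measurable X) (hY : Measurable Y)
    (hXY : IndepFun X Y P) {r : ℝ} (hr : 0 < r) (hYd : P.map Y = expMeasure r)
    {g : ℝ → ℝ} (hg : Measurable g) (hg0 : ∀ x, 0 ≤ g x) :
    ∫ ω, exp (-(g (X ω) * Y ω)) ∂P = ∫ x, r / (r + g x) ∂P.map X := by
  have := isProbabilityMeasure_expMeasure hr
  set F : ℝ × ℝ → ℝ := fun p => exp (-(g p.1 * p.2))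
  have hmap : P.map (fun ω => (X ω, Y ω)) = (P.map X).prod (expMeasure r) := by
    rw [← hYd]
    exact (indepFun_iff_map_prod_eq_prod_map_map hX.aemeasurable hY.aemeasurable).mp hXY
  have hF : Measurable F := by fun_prop
  have hint : Integrable F ((P.map X).prod (expMeasure r)) := by
    refine (integrable_const 1).mono' hF.aestronglyMeasurable ?_
    filter_upwards [Measure.quasiMeasurePreserving_snd.ae (ae_nonneg_expMeasure r)] with p hp
    rw [norm_of_nonneg (exp_pos _).le, exp_le_one_iff, neg_nonpos]
    exact mul_nonneg (hg0 _) hp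
  calc ∫ ω, F (X ω, Y ω) ∂P
      = ∫ p, F p ∂(P.map X).prod (expMeasure r) := by
        rw [← hmap, integral_map (hX.prodMk hY).aemeasurable hF.aestronglyMeasurable]
    _ = ∫ x, ∫ y, F (x, y) ∂expMeasure r ∂P.map X := integral_prod F hint
    _ = ∫ x, r / (r + g x) ∂P.map X :=
        integral_congr_ae (ae_of_all _ fun x => integral_exp_neg_mul_expMeasure hr (hg0 x))

lemma tendsto_integral_exp_neg_div_mul_inv_one_add_sq {a : ℝ} (ha : 0 ≤ a) :
    Tendsto (fun c => ∫ u in Ioi 0, exp (-(a * u / c)) * (1 + u ^ 2)⁻¹) atTop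
      (𝓝 (π / 2)) := by
  have hlim : ∫ u in Ioi (0 : ℝ), (1 + u ^ 2)⁻¹ = π / 2 := by
    rw [integral_Ioi_inv_one_add_sq, arctan_zero, sub_zero]
  rw [← hlim]
  refine tendsto_integral_filter_of_dominated_convergence (fun u => (1 + u ^ 2)⁻¹)
    (.of_forall fun c => (by fun_prop : Measurable _).aestronglyMeasurable) ?_
    integrable_inv_one_add_sq.integrableOn (ae_of_all _ fun u => ?_)
  · filter_upwards [eventually_ge_atTop 0] with c hc
    filter_upwards [ae_restrict_mem measurableSet_Ioi] with u (hu : 0 < u)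
    rw [norm_of_nonneg (by positivity)]
    exact mul_le_of_le_one_left (by positivity)
      (exp_le_one_iff.2 (neg_nonpos.2 (by positivity)))
  · have h0 : Tendsto (fun c => a * u / c) atTop (𝓝 0) :=
      tendsto_const_nhds.div_atTop tendsto_id
    simpa using ((continuous_exp.tendsto _).comp h0.neg).mul_const (1 + u ^ 2)⁻¹

lemma sqrt_mul_integral_inv_one_add_mul_sq_expMeasure {r t : ℝ} (hr : 0 < r) (ht : 0 < t) :
    √t * ∫ x, (1 + t * x ^ 2)⁻¹ ∂expMeasure r
      = r * ∫ u in Ioi 0, exp (-(r * u / √t)) * (1 + u ^ 2)⁻¹ := by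
  have hsqrt : 0 < √t := sqrt_pos.2 ht
  have hsub :=
    integral_comp_mul_left_Ioi (fun u => exp (-(r * u / √t)) * (1 + u ^ 2)⁻¹) 0 hsqrt
  rw [mul_zero, smul_eq_mul] at hsub
  have hcongr : ∀ x, r * exp (-(r * x)) * (1 + t * x ^ 2)⁻¹
      = r * (exp (-(r * (√t * x) / √t)) * (1 + (√t * x) ^ 2)⁻¹) := fun x => by
    rw [mul_pow, sq_sqrt ht.le, mul_div_assoc, mul_div_cancel_left₀ _ hsqrt.ne', mul_assoc]
  simp_rw [integral_expMeasure hr, hcongr, integral_const_mul, hsub]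
  field_simp

lemma tendsto_sqrt_mul_integral_inv_one_add_mul_sq_expMeasure {r : ℝ} (hr : 0 < r) :
    Tendsto (fun t => √t * ∫ x, (1 + t * x ^ 2)⁻¹ ∂expMeasure r) atTop
      (𝓝 (r * (π / 2))) := by
  refine (((tendsto_integral_exp_neg_div_mul_inv_one_add_sq hr.le).comp
    tendsto_sqrt_atTop).const_mul r).congr' ?_
  filter_upwards [eventually_gt_atTop 0] with t ht
  exact (sqrt_mul_integral_inv_one_add_mul_sq_expMeasure hr ht).symm

lemma tendsto_sqrt_mul_integral_exp_neg_mul_sq_mul {Ω : Type*} [MeasurableSpace Ω]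
    {P : Measure Ω} [IsProbabilityMeasure P] {X Y : Ω → ℝ} (hX : Measurable X)
    (hY : Measurable Y) (hXY : IndepFun X Y P) {lsr lrd : ℝ} (hlsr : 0 < lsr) (hlrd : 0 < lrd)
    (hXd : P.map X = expMeasure lsr⁻¹) (hYd : P.map Y = expMeasure lrd⁻¹) :
    Tendsto (fun s => √(s * lrd) * ∫ ω, exp (-(s * X ω ^ 2 * Y ω)) ∂P) atTop
      (𝓝 (lsr⁻¹ * (π / 2))) := by
  refine ((tendsto_sqrt_mul_integral_inv_one_add_mul_sq_expMeasure (inv_pos.2 hlsr)).comp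
    (tendsto_id.atTop_mul_const hlrd)).congr' ?_
  filter_upwards [eventually_ge_atTop 0] with s hs
  rw [Function.comp_apply, id, integral_exp_neg_mul_of_indepFun hX hY hXY (inv_pos.2 hlrd) hYd
    (g := fun x => s * x ^ 2) (by fun_prop) fun x => by positivity, hXd]
  congr 2 with x
  field_simp

/-- For independent exponential `X` (mean `λ_sr`) and `Y` (mean `λ_rd`), as
`b̂ → ∞`, the asymptotic ASER of BDPSK, `P̄_BDPSK = (1/2)·E[exp(−b̂·X²·Y)]`, is asymptotically
equivalent to `π/(4·λ_sr·√(b̂·λ_rd))`, and the asymptotic ASER of noncoherent BFSK,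
`P̄_BFSK = (1/2)·E[exp(−(1/2)·b̂·X²·Y)]`, is asymptotically equivalent to
`π·√2/(4·λ_sr·√(b̂·λ_rd))`. -/
theorem asymptotic_aser_bdpsk_bfsk
    {Ω : Type*} [MeasurableSpace Ω] (P : Measure Ω) [IsProbabilityMeasure P]
    (X Y : Ω → ℝ) (hX : Measurable X) (hY : Measurable Y)
    (hXY : IndepFun X Y P)
    (lsr lrd : ℝ) (hlsr : 0 < lsr) (hlrd : 0 < lrd)
    (hXd : Measure.map X P = expMeasure lsr⁻¹)
    (hYd : Measure.map Y P = expMeasure lrd⁻¹) :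
    Tendsto (fun b : ℝ =>
        ((1 / 2) * ∫ ω, Real.exp (-(b * X ω ^ 2 * Y ω)) ∂P) /
          (π / (4 * lsr * Real.sqrt (b * lrd))))
      atTop (nhds 1) ∧
    Tendsto (fun b : ℝ =>
        ((1 / 2) * ∫ ω, Real.exp (-((1 / 2) * b * X ω ^ 2 * Y ω)) ∂P) /
          (π * Real.sqrt 2 / (4 * lsr * Real.sqrt (b * lrd))))
      atTop (nhds 1) := by
  have key := (tendsto_sqrt_mul_integral_exp_neg_mul_sq_mul hX hY hXY hlsr hlrd hXd hYd).const_mul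
    (2 * lsr / π)
  rw [show 2 * lsr / π * (lsr⁻¹ * (π / 2)) = 1 by field_simp] at key
  have bdpsk : Tendsto (fun b : ℝ =>
      ((1 / 2) * ∫ ω, exp (-(b * X ω ^ 2 * Y ω)) ∂P) / (π / (4 * lsr * √(b * lrd))))
      atTop (𝓝 1) := by
    refine key.congr fun b => ?_
    field_simp
    ring
  refine ⟨bdpsk, (bdpsk.comp (tendsto_id.const_mul_atTop one_half_pos)).congr fun b => ?_⟩
  have hsqrt : √(b * lrd) = √2 * √(1 / 2 * b * lrd) := by
    rw [← sqrt_mul zero_le_two]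
    ring_nf
  simp only [Function.comp_apply, id, hsqrt]
  field_simp
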